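/- arXiv:2402.16745 — 2 statements merged into one kernel-verified Lean document; each statement's English description precedes it below -/
import Mathlib

section
/- Let M be a norm on ℝⁿ with differentiable dual M⁰ away from 0. Suppose M and M⁰ satisfy M(∇M⁰(x)) = 1 for x ≠ 0, and M is strictly convex with M² ∈ C². Then for every x ≠ 0, M⁰(x) · ∇M(∇M⁰(x)) = x. -/
/-!
Write `ξ = ∇M⁰(x)`, so that `M ξ = 1`. Since `M⁰` is positively homogeneous, Euler's identity
gives `⟪ξ, x⟫ = M⁰ x`. By definition of the dual norm `⟪x, η⟫ ≤ M⁰ x * M η` for every `η`, so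
`η ↦ ⟪x, η⟫ - M⁰ x * M η` attains its maximum `0` at `ξ`. Near `ξ` the norm `M = √(M²)` is
differentiable, hence the gradient of this function vanishes at `ξ`: `x = M⁰ x • ∇M(ξ)`.
-/

open Real RealInnerProductSpace

open scoped Pointwise

namespace Seminorm

variable {E : Type*} [NormedAddCommGroup E] [InnerProductSpace ℝ E] (p : Seminorm ℝ E)

-- `sSup` of an unbounded set is `0`; `bddAbove_inner_image` rules this out for definite `p`.
noncomputable def dualNorm (x : E) : ℝ := sSup ((fun ξ => ⟪x, ξ⟫) '' {ξ | p ξ = 1})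

lemma dualNorm_smul_of_nonneg {t : ℝ} (ht : 0 ≤ t) (x : E) :
    p.dualNorm (t • x) = t * p.dualNorm x := by
  have himage : (fun ξ => ⟪t • x, ξ⟫) '' {ξ | p ξ = 1} =
      t • (fun ξ => ⟪x, ξ⟫) '' {ξ | p ξ = 1} := by
    rw [← Set.image_smul, Set.image_image]
    simp only [real_inner_smul_left, smul_eq_mul]
  rw [dualNorm, himage, Real.sSup_smul_of_nonneg ht, smul_eq_mul, dualNorm]

variable [FiniteDimensional ℝ E]

lemma exists_pos_mul_norm_le (hp : ∀ x, p x = 0 → x = 0) : ∃ m > 0, ∀ y : E, m * ‖y‖ ≤ p y := by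
  rcases subsingleton_or_nontrivial E with hE | hE
  · exact ⟨1, one_pos, fun y => by simp [Subsingleton.elim y 0]⟩
  have hcont : Continuous p := p.convexOn.locallyLipschitz.continuous
  obtain ⟨z, hz, hmin⟩ := (isCompact_sphere (0 : E) 1).exists_isMinOn
    (NormedSpace.sphere_nonempty.mpr zero_le_one) hcont.continuousOn
  have hz0 : z ≠ 0 := ne_zero_of_mem_unit_sphere ⟨z, hz⟩
  refine ⟨p z, (apply_nonneg p z).lt_of_ne fun h => hz0 (hp z h.symm), fun y => ?_⟩
  rcases eq_or_ne y 0 with rfl | hy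
  · simp
  have hy' : 0 < ‖y‖ := norm_pos_iff.mpr hy
  have hmem : ‖y‖⁻¹ • y ∈ Metric.sphere (0 : E) 1 := by
    simp [norm_smul, hy'.ne']
  have := hmin hmem
  simp only [Set.mem_ofPred_eq, map_smul_eq_mul, norm_inv, norm_norm] at this
  rwa [le_inv_mul_iff₀ hy', mul_comm] at this

lemma bddAbove_inner_image (hp : ∀ x, p x = 0 → x = 0) (x : E) :
    BddAbove ((fun ξ => ⟪x, ξ⟫) '' {ξ | p ξ = 1}) := by
  obtain ⟨m, hm, hmp⟩ := p.exists_pos_mul_norm_le hp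
  refine ⟨‖x‖ * m⁻¹, ?_⟩
  rintro _ ⟨η, hη, rfl⟩
  have hη' : ‖η‖ ≤ m⁻¹ := by
    rw [← one_div, le_div_iff₀ hm, mul_comm, ← hη]
    exact hmp η
  exact (real_inner_le_norm x η).trans (mul_le_mul_of_nonneg_left hη' (norm_nonneg x))

lemma inner_le_dualNorm_mul (hp : ∀ x, p x = 0 → x = 0) (x η : E) :
    ⟪x, η⟫ ≤ p.dualNorm x * p η := by
  rcases eq_or_ne η 0 with rfl | hη
  · simp
  have hpη : 0 < p η := (apply_nonneg p η).lt_of_ne fun h => hη (hp η h.symm)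
  have hunit : p ((p η)⁻¹ • η) = 1 := by
    rw [map_smul_eq_mul, norm_inv, Real.norm_of_nonneg hpη.le, inv_mul_cancel₀ hpη.ne']
  have hle : ⟪x, (p η)⁻¹ • η⟫ ≤ p.dualNorm x :=
    le_csSup (p.bddAbove_inner_image hp x) ⟨_, hunit, rfl⟩
  rwa [real_inner_smul_right, inv_mul_le_iff₀ hpη, mul_comm] at hle

end Seminorm

section Gradient

variable {E : Type*} [NormedAddCommGroup E] [InnerProductSpace ℝ E] [CompleteSpace E]

lemma inner_gradient_self_of_homogeneous {f : E → ℝ} {g x : E} (hf : HasGradientAt f g x)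
    (hhom : ∀ t : ℝ, 0 ≤ t → f (t • x) = t * f x) : ⟪g, x⟫ = f x := by
  have hray : HasDerivAt (fun t : ℝ => f (t • x)) ⟪g, x⟫ 1 := by
    have hfx : HasFDerivAt f (InnerProductSpace.toDual ℝ E g) ((1 : ℝ) • x) := by
      rw [one_smul]; exact hf.hasFDerivAt
    exact (hfx.comp_hasDerivAt (1 : ℝ) ((hasDerivAt_id (1 : ℝ)).smul_const x)).congr_deriv
      (by simp)
  have hlin : HasDerivAt (fun t : ℝ => f (t • x)) (f x) 1 := by
    have hmul : HasDerivAt (fun t : ℝ => t * f x) (f x) 1 := by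
      simpa using (hasDerivAt_id (1 : ℝ)).mul_const (f x)
    refine hmul.congr_of_eventuallyEq ?_
    filter_upwards [Ioi_mem_nhds one_pos] with t ht using hhom t (le_of_lt ht)
  exact hray.unique hlin

lemma eq_smul_of_isMaxOn_inner_sub_smul {f : E → ℝ} {g ξ x : E} {c : ℝ}
    (hf : HasGradientAt f g ξ) (hmax : IsMaxOn (fun η => ⟪x, η⟫ - c * f η) Set.univ ξ) :
    x = c • g := by
  have hderiv : HasFDerivAt (fun η => ⟪x, η⟫ - c * f η)
      (innerSL ℝ x - c • InnerProductSpace.toDual ℝ E g) ξ :=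
    (innerSL ℝ x).hasFDerivAt.sub (hf.hasFDerivAt.const_mul c)
  have hzero := (hmax.isLocalMax Filter.univ_mem).hasFDerivAt_eq_zero hderiv
  refine ext_inner_right ℝ fun v => ?_
  have := DFunLike.congr_fun hzero v
  simp only [sub_apply, coe_innerSL_apply, smul_apply,
    InnerProductSpace.toDual_apply_apply, smul_eq_mul, zero_apply] at this
  rw [real_inner_smul_left]
  linarith

end Gradient

lemma differentiableAt_of_differentiableAt_sq {E : Type*} [NormedAddCommGroup E]
    [NormedSpace ℝ E] {f : E → ℝ} {ξ : E} (hf : ∀ y, 0 ≤ f y)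
    (hsq : DifferentiableAt ℝ (fun y => f y ^ 2) ξ) (hξ : f ξ ≠ 0) : DifferentiableAt ℝ f ξ := by
  have hsqrt := hsq.sqrt (pow_ne_zero 2 hξ)
  simpa only [Real.sqrt_sq (hf _)] using hsqrt

theorem stmt9_general (n : ℕ) (M : EuclideanSpace ℝ (Fin n) → ℝ)
    (hM1 : ∀ x, M x = 0 ↔ x = 0)
    (hM2 : ∀ (c : ℝ) x, M (c • x) = |c| * M x)
    (hM3 : ∀ x y, M (x + y) ≤ M x + M y)
    (M₀ : EuclideanSpace ℝ (Fin n) → ℝ)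
    (hdual : ∀ x, M₀ x = sSup ((fun ξ => ⟪x, ξ⟫) '' {ξ | M ξ = 1}))
    (hM₀diff : ∀ x : EuclideanSpace ℝ (Fin n), x ≠ 0 → DifferentiableAt ℝ M₀ x)
    (hone : ∀ x : EuclideanSpace ℝ (Fin n), x ≠ 0 → M (gradient M₀ x) = 1)
    (hMC2 : ContDiffOn ℝ 2 (fun x => (M x) ^ 2) {(0 : EuclideanSpace ℝ (Fin n))}ᶜ)
    (x : EuclideanSpace ℝ (Fin n)) (hx : x ≠ 0) :
    M₀ x • gradient M (gradient M₀ x) = x := by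
  let p : Seminorm ℝ (EuclideanSpace ℝ (Fin n)) := Seminorm.of M hM3 hM2
  have hp : ∀ y, p y = 0 → y = 0 := fun y => (hM1 y).mp
  have hM₀ : M₀ = p.dualNorm := funext hdual
  set ξ := gradient M₀ x
  have hξ : M ξ = 1 := hone x hx
  have heuler : ⟪ξ, x⟫ = M₀ x := inner_gradient_self_of_homogeneous (hM₀diff x hx).hasGradientAt
    fun t ht => by rw [hM₀]; exact p.dualNorm_smul_of_nonneg ht x
  have hξ0 : ξ ≠ 0 := fun h => by simp [h, (hM1 0).mpr rfl] at hξ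
  have hMξ : DifferentiableAt ℝ M ξ := differentiableAt_of_differentiableAt_sq
    (apply_nonneg p) ((hMC2.contDiffAt (isOpen_compl_singleton.mem_nhds hξ0)).differentiableAt
      two_ne_zero) (by simp [hξ])
  refine (eq_smul_of_isMaxOn_inner_sub_smul hMξ.hasGradientAt fun η _ => ?_).symm
  have hle : ⟪x, η⟫ ≤ M₀ x * M η := hM₀ ▸ p.inner_le_dualNorm_mul hp x η
  have hattained : ⟪x, ξ⟫ = M₀ x := by rw [real_inner_comm, heuler]
  change ⟪x, η⟫ - M₀ x * M η ≤ ⟪x, ξ⟫ - M₀ x * M ξ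
  rw [hattained, hξ]
  linarith

theorem stmt9 (n : ℕ) (hn : 0 < n) (M : EuclideanSpace ℝ (Fin n) → ℝ)
    (hM0 : ∀ x, 0 ≤ M x)
    (hM1 : ∀ x, M x = 0 ↔ x = 0)
    (hM2 : ∀ (c : ℝ) x, M (c • x) = |c| * M x)
    (hM3 : ∀ x y, M (x + y) ≤ M x + M y)
    (M₀ : EuclideanSpace ℝ (Fin n) → ℝ)
    (hdual : ∀ x, M₀ x = sSup ((fun ξ => ⟪x, ξ⟫) '' {ξ | M ξ = 1}))
    (hM₀diff : ∀ x : EuclideanSpace ℝ (Fin n), x ≠ 0 → DifferentiableAt ℝ M₀ x)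
    (hone : ∀ x : EuclideanSpace ℝ (Fin n), x ≠ 0 → M (gradient M₀ x) = 1)
    (hstrict : StrictConvexOn ℝ Set.univ (fun x => (M x) ^ 2))
    (hMC2 : ContDiffOn ℝ 2 (fun x => (M x) ^ 2) {(0 : EuclideanSpace ℝ (Fin n))}ᶜ)
    (x : EuclideanSpace ℝ (Fin n)) (hx : x ≠ 0) :
    M₀ x • gradient M (gradient M₀ x) = x :=
  stmt9_general n M hM1 hM2 hM3 M₀ hdual hM₀diff hone hMC2 x hx
end

section
/- Let γ > c > 0 be reals, a < 1 real, and α, β real parameters with the hypergeometric series F(α,β;c;ay) absolutely convergent for y ∈ [0,1] (e.g. |a| < 1). Then ∫₀¹ (1-y)^{γ-c-1} y^{c-1} F(α,β;c;ay) dy = (Γ(c)Γ(γ-c)/Γ(γ)) F(α,β;γ;a) (Bateman's integral formula). -/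
open Real MeasureTheory

/-- The Gauss hypergeometric series. -/
noncomputable def hypF (a b c z : ℝ) : ℝ :=
  ∑' n : ℕ,
    (ascPochhammer ℝ n).eval a * (ascPochhammer ℝ n).eval b /
      ((ascPochhammer ℝ n).eval c * n.factorial) * z ^ n

lemma gamma_asc (x : ℝ) (hx : 0 < x) (n : ℕ) :
    Real.Gamma (x + n) = (ascPochhammer ℝ n).eval x * Real.Gamma x := by
  induction n with
  | zero => simp
  | succ n ih =>
    have h : x + ((n : ℕ) + 1 : ℕ) = (x + n) + 1 := by push_cast; ring
    rw [h, Real.Gamma_add_one (by positivity), ih, ascPochhammer_succ_eval]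
    ring

lemma betaIntegrable {u v : ℝ} (hu : 0 < u) (hv : 0 < v) :
    IntegrableOn (fun y : ℝ => y ^ (u - 1) * (1 - y) ^ (v - 1)) (Set.Ioo 0 1) := by
  have h := (Complex.betaIntegral_convergent (u := u) (v := v) (by simpa) (by simpa))
  have h2 : IntegrableOn (fun x : ℝ => (x : ℂ) ^ ((u : ℂ) - 1) * (1 - (x : ℂ)) ^ ((v : ℂ) - 1))
      (Set.Ioo 0 1) :=
    ((intervalIntegrable_iff_integrableOn_Ioc_of_le zero_le_one).mp h).mono_set
      Set.Ioo_subset_Ioc_self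
  have h3 := h2.re
  refine IntegrableOn.congr_fun h3 ?_ measurableSet_Ioo
  intro y hy
  simp only [RCLike.re_to_complex]
  rw [show ((u : ℂ) - 1) = ((u - 1 : ℝ) : ℂ) by push_cast; ring,
    show (1 - (y : ℂ)) = ((1 - y : ℝ) : ℂ) by push_cast; ring,
    show ((v : ℂ) - 1) = ((v - 1 : ℝ) : ℂ) by push_cast; ring,
    ← Complex.ofReal_cpow hy.1.le, ← Complex.ofReal_cpow (by linarith [hy.2] : (0:ℝ) ≤ 1 - y),
    ← Complex.ofReal_mul, Complex.ofReal_re]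

lemma realBeta {u v : ℝ} (hu : 0 < u) (hv : 0 < v) :
    ∫ y in Set.Ioo (0:ℝ) 1, y ^ (u - 1) * (1 - y) ^ (v - 1) =
      Real.Gamma u * Real.Gamma v / Real.Gamma (u + v) := by
  have key := Complex.Gamma_mul_Gamma_eq_betaIntegral (s := u) (t := v) (by simpa) (by simpa)
  have hβ : Complex.betaIntegral u v =
      ((∫ y in Set.Ioo (0:ℝ) 1, y ^ (u - 1) * (1 - y) ^ (v - 1) : ℝ) : ℂ) := by
    rw [Complex.betaIntegral, intervalIntegral.integral_of_le zero_le_one,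
      integral_Ioc_eq_integral_Ioo]
    rw [show ((∫ y in Set.Ioo (0:ℝ) 1, y ^ (u - 1) * (1 - y) ^ (v - 1) : ℝ) : ℂ) =
        ∫ y in Set.Ioo (0:ℝ) 1, ((y ^ (u - 1) * (1 - y) ^ (v - 1) : ℝ) : ℂ) from
      (integral_ofReal (f := fun y => y ^ (u - 1) * (1 - y) ^ (v - 1))).symm]
    refine setIntegral_congr_fun measurableSet_Ioo ?_
    intro y hy
    simp only
    rw [Complex.ofReal_mul, Complex.ofReal_cpow hy.1.le,
      Complex.ofReal_cpow (by linarith [hy.2] : (0:ℝ) ≤ 1 - y)]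
    push_cast
    ring
  rw [hβ] at key
  have hne : Real.Gamma (u + v) ≠ 0 := (Real.Gamma_pos_of_pos (by linarith)).ne'
  have : Real.Gamma u * Real.Gamma v =
      Real.Gamma (u + v) * ∫ y in Set.Ioo (0:ℝ) 1, y ^ (u - 1) * (1 - y) ^ (v - 1) := by
    have := key
    rw [← Complex.ofReal_add, Complex.Gamma_ofReal, Complex.Gamma_ofReal, Complex.Gamma_ofReal]
      at this
    exact_mod_cast this
  field_simp
  linarith [this]

theorem stmt19 (α β c γ a : ℝ) (hc : 0 < c) (hγc : c < γ) (ha : |a| < 1)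
    (hconv : ∀ y ∈ Set.Icc (0 : ℝ) 1,
      Summable (fun n : ℕ =>
        |(ascPochhammer ℝ n).eval α * (ascPochhammer ℝ n).eval β /
            ((ascPochhammer ℝ n).eval c * n.factorial) * (a * y) ^ n|)) :
    ∫ y in Set.Ioo (0 : ℝ) 1,
        (1 - y) ^ (γ - c - 1) * y ^ (c - 1) * hypF α β c (a * y) =
      (Real.Gamma c * Real.Gamma (γ - c) / Real.Gamma γ) * hypF α β γ a := by
  have hγ : 0 < γ := lt_trans hc hγc
  have hγc' : 0 < γ - c := by linarith
  set A : ℕ → ℝ := fun n => (ascPochhammer ℝ n).eval α * (ascPochhammer ℝ n).eval β /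
      ((ascPochhammer ℝ n).eval c * n.factorial) with hA
  set F : ℕ → ℝ → ℝ := fun n y =>
      (1 - y) ^ (γ - c - 1) * y ^ (c - 1) * (A n * (a * y) ^ n) with hFdef
  have hFeq : ∀ n : ℕ, Set.EqOn (F n)
      (fun y => (A n * a ^ n) * (y ^ (c + n - 1) * (1 - y) ^ (γ - c - 1)))
      (Set.Ioo 0 1) := by
    intro n y hy
    simp only [hFdef, mul_pow]
    rw [show c + (n : ℝ) - 1 = (c - 1) + n by ring, Real.rpow_add hy.1,
      Real.rpow_natCast]
    ring
  have hIntB : ∀ n : ℕ,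
      IntegrableOn (fun y : ℝ => y ^ (c + n - 1) * (1 - y) ^ (γ - c - 1))
        (Set.Ioo 0 1) := by
    intro n
    have := betaIntegrable (u := c + n) (v := γ - c) (by positivity) hγc'
    simpa using this
  have hInt : ∀ n : ℕ, IntegrableOn (F n) (Set.Ioo 0 1) := by
    intro n
    exact IntegrableOn.congr_fun ((hIntB n).const_mul (A n * a ^ n)) (hFeq n).symm measurableSet_Ioo
  have hval : ∀ n : ℕ, ∫ y in Set.Ioo (0:ℝ) 1, F n y =
      (A n * a ^ n) * (Real.Gamma (c + n) * Real.Gamma (γ - c) / Real.Gamma (γ + n)) := by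
    intro n
    rw [setIntegral_congr_fun measurableSet_Ioo (hFeq n), integral_const_mul]
    congr 1
    have := realBeta (u := c + n) (v := γ - c) (by positivity) hγc'
    rw [this, show c + (n : ℝ) + (γ - c) = γ + n by ring]
  -- norm integrals
  have hnorm : ∀ n : ℕ, ∫ y in Set.Ioo (0:ℝ) 1, ‖F n y‖ =
      |A n * a ^ n| * ∫ y in Set.Ioo (0:ℝ) 1, y ^ (c + n - 1) * (1 - y) ^ (γ - c - 1) := by
    intro n
    rw [← integral_const_mul]
    refine setIntegral_congr_fun measurableSet_Ioo ?_
    intro y hy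
    obtain ⟨hy1, hy2⟩ := hy
    have h1 : 0 < y ^ (c + n - 1) * (1 - y) ^ (γ - c - 1) := by
      have h2 : (0:ℝ) < 1 - y := by linarith
      positivity
    show ‖F n y‖ = |A n * a ^ n| * (y ^ (c + n - 1) * (1 - y) ^ (γ - c - 1))
    rw [Real.norm_eq_abs, hFeq n ⟨hy1, hy2⟩, abs_mul, abs_of_pos h1]
  have hbound : ∀ n : ℕ,
      ∫ y in Set.Ioo (0:ℝ) 1, y ^ (c + n - 1) * (1 - y) ^ (γ - c - 1) ≤
      ∫ y in Set.Ioo (0:ℝ) 1, y ^ (c + (0:ℕ) - 1) * (1 - y) ^ (γ - c - 1) := by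
    intro n
    refine setIntegral_mono_on (hIntB n) (hIntB 0) measurableSet_Ioo ?_
    intro y hy
    refine mul_le_mul_of_nonneg_right ?_ (Real.rpow_nonneg (by linarith [hy.2]) _)
    exact Real.rpow_le_rpow_of_exponent_ge hy.1 hy.2.le
      (by push_cast; linarith [Nat.cast_nonneg (α := ℝ) n])
  have hsum : Summable fun n : ℕ => ∫ y in Set.Ioo (0:ℝ) 1, ‖F n y‖ := by
    have h1 : Summable fun n : ℕ => |A n * a ^ n| := by
      simpa using hconv 1 (by norm_num)
    refine Summable.of_nonneg_of_le
      (fun n => integral_nonneg fun y => norm_nonneg _)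
      (fun n => ?_)
      (h1.mul_right (∫ y in Set.Ioo (0:ℝ) 1, y ^ (c + (0:ℕ) - 1) * (1 - y) ^ (γ - c - 1)))
    rw [hnorm n]
    exact mul_le_mul_of_nonneg_left (hbound n) (abs_nonneg _)
  have step1 : ∫ y in Set.Ioo (0:ℝ) 1,
      (1 - y) ^ (γ - c - 1) * y ^ (c - 1) * hypF α β c (a * y) =
      ∫ y in Set.Ioo (0:ℝ) 1, ∑' n : ℕ, F n y := by
    refine setIntegral_congr_fun measurableSet_Ioo fun y hy => ?_
    simp only [hypF, hFdef, ← hA]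
    exact (tsum_mul_left).symm
  rw [step1, ← integral_tsum_of_summable_integral_norm hInt hsum]
  have hterm : ∀ n : ℕ,
      (A n * a ^ n) * (Real.Gamma (c + n) * Real.Gamma (γ - c) / Real.Gamma (γ + n)) =
      (Real.Gamma c * Real.Gamma (γ - c) / Real.Gamma γ) *
        ((ascPochhammer ℝ n).eval α * (ascPochhammer ℝ n).eval β /
          ((ascPochhammer ℝ n).eval γ * n.factorial) * a ^ n) := by
    intro n
    rw [gamma_asc c hc n, gamma_asc γ hγ n, hA]
    have h1 : (ascPochhammer ℝ n).eval c ≠ 0 := (ascPochhammer_pos n c hc).ne'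
    have h2 : (ascPochhammer ℝ n).eval γ ≠ 0 := (ascPochhammer_pos n γ hγ).ne'
    have h3 : Real.Gamma c ≠ 0 := (Real.Gamma_pos_of_pos hc).ne'
    have h4 : Real.Gamma γ ≠ 0 := (Real.Gamma_pos_of_pos hγ).ne'
    have h5 : (n.factorial : ℝ) ≠ 0 := Nat.cast_ne_zero.mpr n.factorial_ne_zero
    field_simp
  calc ∑' n : ℕ, ∫ y in Set.Ioo (0:ℝ) 1, F n y
      = ∑' n : ℕ, (Real.Gamma c * Real.Gamma (γ - c) / Real.Gamma γ) *
        ((ascPochhammer ℝ n).eval α * (ascPochhammer ℝ n).eval β /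
          ((ascPochhammer ℝ n).eval γ * n.factorial) * a ^ n) := by
        refine tsum_congr fun n => ?_
        rw [hval n, hterm n]
    _ = (Real.Gamma c * Real.Gamma (γ - c) / Real.Gamma γ) * hypF α β γ a := by
        rw [tsum_mul_left, hypF]
end
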